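/- Let F₂ be the free group on x and y. Define a₁ = x³, b₁ = y³, and recursively aₛ = x b_{s-1} x and bₛ = y a_{s-1} y for s ≥ 2. Then for every n ≥ 1, the elements a₁, b₁, ..., aₙ, bₙ form a free basis of a free subgroup of F₂ of rank 2n. -/

import Mathlib

/-!
Each `aₛ`, `bₛ` is a positive palindrome `w = p c p̃` of length `2s + 1`, with `p̃` the reverse of
`p`. When `w` multiplies a reduced word `g`, the cancellation can reach `c` only if `g` begins with
`(c p̃)⁻¹ = p' c'`, where `'` inverts every letter; otherwise `w g` begins with `p c`. Symmetrically,
`w⁻¹ = p' c' p̃'` sends words not beginning with `p c` to words beginning with `p' c'`. So ping-pong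
applies to the sets "begins with `p c`" and "begins with `p' c'`" once these prefixes are
incomparable for distinct generators: the `p c` are positive and the `p' c'` negative, and `p c`
alternates between `x` and `y` until it ends in a doubled letter, which pins down its length and
its first letter.
-/

namespace Stmt6

abbrev F2 := FreeGroup (Fin 2)

def x : F2 := FreeGroup.of 0
def y : F2 := FreeGroup.of 1

/-- `ab s = (a_{s+1}, b_{s+1})` (0-based). -/
def ab : ℕ → F2 × F2
  | 0 => (x ^ 3, y ^ 3)
  | s + 1 => (x * (ab s).2 * x, y * (ab s).1 * y)

end Stmt6

universe u

namespace FreeGroup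

variable {α : Type u}

theorem isReduced_map_true (l : List α) : IsReduced (l.map (·, true)) := by
  induction l with
  | nil => exact .nil
  | cons a l ih =>
    cases l with
    | nil => exact .singleton
    | cons b l => exact isReduced_cons_cons.mpr ⟨fun _ => rfl, ih⟩

theorem invRev_prefix_invRev_of_suffix {l₁ l₂ : List (α × Bool)} (h : l₁ <:+ l₂) :
    invRev l₁ <+: invRev l₂ := by
  obtain ⟨t, rfl⟩ := h
  rw [invRev_append]
  exact List.prefix_append _ _

theorem _root_.Function.Injective.lift_comp {β G : Type*} [Group G] {a : α → G}
    (ha : Function.Injective (lift a)) {f : β → α} (hf : Function.Injective f) :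
    Function.Injective (lift (a ∘ f)) := by
  have hlift : lift (a ∘ f) = (lift a).comp (map f) := by
    ext
    simp
  rw [hlift, MonoidHom.coe_comp]
  exact ha.comp (map_injective hf)

variable [DecidableEq α]

theorem IsReduced.exists_reduce_append {u v : List (α × Bool)} (hu : IsReduced u)
    (hv : IsReduced v) :
    ∃ u' w v', u = u' ++ w ∧ v = invRev w ++ v' ∧ reduce (u ++ v) = u' ++ v' := by
  induction v generalizing u with
  | nil => exact ⟨u, [], [], by simp, by simp, by simp [hu.reduce_eq]⟩
  | cons m v ih =>
    rcases List.eq_nil_or_concat u with rfl | ⟨u₀, l, rfl⟩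
    · exact ⟨[], [], m :: v, by simp, by simp, by simp [hv.reduce_eq]⟩
    simp only [List.concat_eq_append] at hu ⊢
    by_cases hm : m = (l.1, !l.2)
    · obtain ⟨u', w, v', rfl, rfl, hred⟩ :=
        ih (hu.infix (List.prefix_append _ _).isInfix) (List.IsChain.tail hv)
      refine ⟨u', w ++ [l], v', by simp, by simp [invRev, hm], ?_⟩
      have hstep : Red.Step (u' ++ w ++ [l] ++ m :: (invRev w ++ v'))
          (u' ++ w ++ (invRev w ++ v')) := by
        obtain ⟨x, b⟩ := l
        subst hm
        simpa using Red.Step.not (L₁ := u' ++ w) (x := x) (b := b)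
      rw [reduce.Step.eq hstep, hred]
    · refine ⟨u₀ ++ [l], [], m :: v, by simp, by simp, IsReduced.reduce_eq ?_⟩
      refine IsReduced.append_overlap hu (isReduced_cons_cons.mpr ⟨fun h₁ => ?_, hv⟩) (by simp)
      obtain ⟨x, b⟩ := l
      obtain ⟨x', b'⟩ := m
      cases b <;> cases b' <;> simp_all

theorem prefix_toWord_mul {h g : FreeGroup α} {p q : List (α × Bool)} {c : α × Bool}
    (hh : h.toWord = p ++ c :: q) (hg : ¬ invRev (c :: q) <+: g.toWord) :
    p ++ [c] <+: (h * g).toWord := by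
  obtain ⟨u', w, v', hu, hv, hred⟩ := (isReduced_toWord (x := h)).exists_reduce_append
    (isReduced_toWord (x := g))
  rw [toWord_mul, hred]
  have hw : w.length < (c :: q).length := by
    by_contra! hlen
    have hsuffix : c :: q <:+ w :=
      List.suffix_of_suffix_length_le (hh ▸ List.suffix_append _ _) (hu ▸ List.suffix_append _ _)
        hlen
    exact hg (hv ▸ (invRev_prefix_invRev_of_suffix hsuffix).trans (List.prefix_append _ _))
  have hlen : (p ++ [c]).length ≤ u'.length := by
    have := congrArg List.length (hh.symm.trans hu)
    simp only [List.length_append, List.length_cons, List.length_nil] at this hw ⊢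
    omega
  exact (List.prefix_of_prefix_length_le (hh ▸ by simp) (hu ▸ List.prefix_append _ _) hlen).trans
    (List.prefix_append _ _)

theorem invRev_prefix_toWord_inv_mul {h g : FreeGroup α} {p q : List (α × Bool)} {c : α × Bool}
    (hh : h.toWord = p ++ c :: q) (hg : ¬ p ++ [c] <+: g.toWord) :
    invRev (c :: q) <+: (h⁻¹ * g).toWord := by
  have hinv : h⁻¹.toWord = invRev q ++ (c.1, !c.2) :: invRev p := by
    simp [toWord_inv, hh, invRev]
  have hinvRev : invRev ((c.1, !c.2) :: invRev p) = p ++ [c] := by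
    simp [invRev, List.map_reverse, Function.comp_def]
  have key := prefix_toWord_mul hinv (g := g) (by rwa [hinvRev])
  simpa [invRev] using key

theorem disjoint_setOf_prefix_toWord {l₁ l₂ : List (α × Bool)} (h₁ : ¬ l₁ <+: l₂)
    (h₂ : ¬ l₂ <+: l₁) :
    Disjoint {g : FreeGroup α | l₁ <+: g.toWord} {g | l₂ <+: g.toWord} :=
  Set.disjoint_left.mpr fun _ hg₁ hg₂ => (List.prefix_or_prefix_of_prefix hg₁ hg₂).elim h₁ h₂

theorem injective_lift_of_toWord_prefixes {ι : Type u} [Nontrivial ι] (a : ι → FreeGroup α)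
    (p q : ι → List (α × Bool)) (c : ι → α × Bool) (ha : ∀ i, (a i).toWord = p i ++ c i :: q i)
    (hP : ∀ i j, p i ++ [c i] <+: p j ++ [c j] → i = j)
    (hQ : ∀ i j, invRev (c i :: q i) <+: invRev (c j :: q j) → i = j)
    (hPQ : ∀ i j, ¬ p i ++ [c i] <+: invRev (c j :: q j))
    (hQP : ∀ i j, ¬ invRev (c j :: q j) <+: p i ++ [c i]) :
    Function.Injective (lift a) := by
  apply injective_lift_of_ping_pong a (fun i => {g : FreeGroup α | p i ++ [c i] <+: g.toWord})
    (fun i => {g : FreeGroup α | invRev (c i :: q i) <+: g.toWord})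
  · exact fun i => ⟨a i, by simp [ha]⟩
  · exact fun i j hij => disjoint_setOf_prefix_toWord (fun h => hij (hP i j h))
      (fun h => hij (hP j i h).symm)
  · exact fun i j hij => disjoint_setOf_prefix_toWord (fun h => hij (hQ i j h))
      (fun h => hij (hQ j i h).symm)
  · exact fun i j => disjoint_setOf_prefix_toWord (hPQ i j) (hQP i j)
  · rintro i _ ⟨g, hg, rfl⟩
    exact prefix_toWord_mul (ha i) hg
  · rintro i _ ⟨g, hg, rfl⟩
    exact invRev_prefix_toWord_inv_mul (ha i) hg

end FreeGroup

namespace Stmt6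

open FreeGroup

def core : Fin 2 → ℕ → List (Fin 2)
  | e, 0 => [e]
  | e, s + 1 => e :: core (e + 1) s

def mid : Fin 2 → ℕ → Fin 2
  | e, 0 => e
  | e, s + 1 => mid (e + 1) s

def word (e : Fin 2) (s : ℕ) : List (Fin 2) := core e s ++ mid e s :: (core e s).reverse

def front (e : Fin 2) (s : ℕ) : List (Fin 2) := core e s ++ [mid e s]

def gen (i : Fin 2 × ℕ) : F2 := mk ((word i.1 i.2).map (·, true))

theorem word_succ (e : Fin 2) (s : ℕ) : word e (s + 1) = e :: word (e + 1) s ++ [e] := by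
  simp [word, core, mid]

theorem toWord_gen (i : Fin 2 × ℕ) : (gen i).toWord = (word i.1 i.2).map (·, true) :=
  toWord_mk.trans (isReduced_map_true _).reduce_eq

theorem ab_eq (s : ℕ) : ab s = (gen (0, s), gen (1, s)) := by
  induction s with
  | zero => rfl
  | succ s ih =>
    have h01 : (0 : Fin 2) + 1 = 1 := rfl
    have h10 : (1 : Fin 2) + 1 = 0 := rfl
    simp only [ab, ih, gen, word_succ, h01, h10, x, y, of, mul_mk, List.map_cons, List.map_append,
      List.map_nil, List.cons_append, List.nil_append]

theorem front_zero (e : Fin 2) : front e 0 = [e, e] := rfl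

theorem front_succ (e : Fin 2) (s : ℕ) : front e (s + 1) = e :: front (e + 1) s := rfl

theorem exists_front_eq_cons (e : Fin 2) (s : ℕ) : ∃ l, front e s = e :: l := by
  cases s <;> exact ⟨_, rfl⟩

theorem eq_of_front_prefix {e e' : Fin 2} {s t : ℕ} (h : front e s <+: front e' t) :
    e = e' ∧ s = t := by
  induction s generalizing e e' t with
  | zero =>
    cases t with
    | zero => simpa [front_zero] using h
    | succ t =>
      obtain ⟨l, hl⟩ := exists_front_eq_cons (e' + 1) t
      simp only [front_zero, front_succ, hl, List.cons_prefix_cons, List.nil_prefix, and_true] at h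
      omega
  | succ s ih =>
    cases t with
    | zero =>
      obtain ⟨l, hl⟩ := exists_front_eq_cons (e + 1) s
      simp only [front_succ, hl, front_zero, List.cons_prefix_cons, List.prefix_nil] at h
      omega
    | succ t =>
      rw [front_succ, front_succ, List.cons_prefix_cons] at h
      exact ⟨h.1, congrArg (· + 1) (ih h.2).2⟩

theorem injective_lift_gen : Function.Injective (lift gen) := by
  have hP (i : Fin 2 × ℕ) : (core i.1 i.2).map (·, true) ++ [(mid i.1 i.2, true)] =
      (front i.1 i.2).map (·, true) := by
    simp [front]
  have hQ (i : Fin 2 × ℕ) :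
      invRev ((mid i.1 i.2, true) :: (core i.1 i.2).reverse.map (·, true)) =
        (front i.1 i.2).map (·, false) := by
    simp [front, invRev, List.map_reverse]
  have hfront {i j : Fin 2 × ℕ} (h : front i.1 i.2 <+: front j.1 j.2) : i = j :=
    Prod.ext_iff.mpr (eq_of_front_prefix h)
  have hsign (i j : Fin 2 × ℕ) :
      ¬ (front i.1 i.2).map (·, true) <+: (front j.1 j.2).map (·, false) ∧
        ¬ (front j.1 j.2).map (·, false) <+: (front i.1 i.2).map (·, true) := by
    obtain ⟨l, hl⟩ := exists_front_eq_cons i.1 i.2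
    obtain ⟨l', hl'⟩ := exists_front_eq_cons j.1 j.2
    simp [hl, hl']
  refine injective_lift_of_toWord_prefixes gen (fun i => (core i.1 i.2).map (·, true))
    (fun i => (core i.1 i.2).reverse.map (·, true)) (fun i => (mid i.1 i.2, true))
    (fun i => by simp [toWord_gen, word]) ?_ ?_ ?_ ?_
  · intro i j h
    rw [hP, hP, List.prefix_map_iff_of_injective (fun _ _ => congrArg Prod.fst)] at h
    exact hfront h
  · intro i j h
    rw [hQ, hQ, List.prefix_map_iff_of_injective (fun _ _ => congrArg Prod.fst)] at h
    exact hfront h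
  · intro i j
    rw [hP, hQ]
    exact (hsign i j).1
  · intro i j
    rw [hP, hQ]
    exact (hsign i j).2

theorem stmt_6_general (n : ℕ) :
    Function.Injective (FreeGroup.lift
      (Sum.elim (fun i : Fin n => (ab (i : ℕ)).1) (fun i : Fin n => (ab (i : ℕ)).2))) := by
  set f : Fin n ⊕ Fin n → Fin 2 × ℕ := Sum.elim (fun i => (0, i)) (fun i => (1, i))
  have hf : Function.Injective f := by
    rintro (i | i) (j | j) h <;> simp_all [f, Fin.ext_iff]
  have hgen : Sum.elim (fun i : Fin n => (ab (i : ℕ)).1) (fun i : Fin n => (ab (i : ℕ)).2) =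
      gen ∘ f := by
    ext (i | i) <;> simp [f, ab_eq]
  rw [hgen]
  exact injective_lift_gen.lift_comp hf

theorem stmt_6 (n : ℕ) (hn : 1 ≤ n) :
    Function.Injective (FreeGroup.lift
      (Sum.elim (fun i : Fin n => (ab (i : ℕ)).1) (fun i : Fin n => (ab (i : ℕ)).2))) :=
  stmt_6_general n

end Stmt6
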